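/- Let p be a probability vector on {1,...,n_k} with CDF F and inverse map F^{-1}, let V_1,...,V_{n_k} in R^{d_k}, mu = sum_j p_j V_j, and Sigma = sum_j p_j (V_j - mu)(V_j - mu)^T. Then the mean squared error of the independent stratified estimator is at most that of the i.i.d. SANTA estimator with the same budget S: E[|| (1/S) sum_{m=0}^{S-1} V_{F^{-1}(T_m)} - mu ||_2^2] <= E[|| (1/S) sum_{s=1}^{S} V_{i_s} - mu ||_2^2] = (1/S) tr(Sigma), where T_m ~ Uniform([m/S,(m+1)/S)) independently and i_1,...,i_S are i.i.d. categorical with probabilities p. -/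

import Mathlib

/-!
Both estimators have the form `S⁻¹ ∑ m, V (J m)` with independent indices `J m`. Since the
variance of a sum of independent variables is the sum of the variances, coordinatewise,
`E ‖S⁻¹ ∑ m, V (J m) - μ‖² = S⁻¹ ∑ j, p j ‖V j - μ‖² - S⁻² ∑ m, ‖E V (J m) - μ‖²`
as soon as the laws of the `J m` average to `p`. The i.i.d. indices satisfy this trivially, with
`E V (J m) = μ`, so the last term vanishes. The stratified ones satisfy it because the strata
partition `[0, 1)` and `F⁻¹` pushes the uniform law on `[0, 1)` forward to `p`; their last term is
a nonnegative correction. Finally `∑ j, p j ‖V j - μ‖² = tr Σ`.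
-/

open MeasureTheory ProbabilityTheory
open scoped ENNReal

lemma norm_inv_smul_sum_sub_sq {E : Type*} [NormedAddCommGroup E] [NormedSpace ℝ E] {S : ℕ}
    (hS : 0 < S) (x : Fin S → E) (mu : E) :
    ‖(S : ℝ)⁻¹ • ∑ m, x m - mu‖ ^ 2 = (S : ℝ)⁻¹ ^ 2 * ‖∑ m, (x m - mu)‖ ^ 2 := by
  have hS' : (S : ℝ) ≠ 0 := Nat.cast_ne_zero.mpr hS.ne'
  have hsum : (S : ℝ)⁻¹ • ∑ m, x m - mu = (S : ℝ)⁻¹ • ∑ m, (x m - mu) := by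
    rw [Finset.sum_sub_distrib, Finset.sum_const, Finset.card_fin, smul_sub,
      ← Nat.cast_smul_eq_nsmul ℝ, smul_smul, inv_mul_cancel₀ hS', one_smul]
  rw [hsum, norm_smul, mul_pow, norm_inv, Real.norm_natCast]

section FiniteValued

variable {Ω α : Type*} [MeasurableSpace Ω] {P : Measure Ω} [IsProbabilityMeasure P]
  [Fintype α] [MeasurableSpace α] [DiscreteMeasurableSpace α]

lemma memLp_comp_of_finite {J : Ω → α} (hJ : AEMeasurable J P) (g : α → ℝ) (p : ℝ≥0∞) :
    MemLp (fun ω => g (J ω)) p P :=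
  MemLp.of_discrete.comp_of_map hJ

lemma integral_comp_eq_sum {E : Type*} [NormedAddCommGroup E] [NormedSpace ℝ E]
    [CompleteSpace E] {J : Ω → α} (hJ : AEMeasurable J P) (g : α → E) :
    ∫ ω, g (J ω) ∂P = ∑ j, P.real (J ⁻¹' {j}) • g j := by
  rw [← integral_map hJ AEStronglyMeasurable.of_discrete, integral_fintype .of_finite]
  simp_rw [measureReal_def, Measure.map_apply_of_aemeasurable hJ (measurableSet_singleton _)]

variable {ι : Type*} [Fintype ι] {J : ι → Ω → α}

lemma integral_sq_sum_comp_of_iIndepFun (hJ : ∀ m, AEMeasurable (J m) P)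
    (hind : iIndepFun J P) (u : α → ℝ) :
    ∫ ω, (∑ m, u (J m ω)) ^ 2 ∂P
      = (∑ m, ∫ ω, u (J m ω) ∂P) ^ 2 + ∑ m, Var[fun ω => u (J m ω); P] := by
  have hY : ∀ m, MemLp (fun ω => u (J m ω)) 2 P := fun m => memLp_comp_of_finite (hJ m) u 2
  have hvar : Var[∑ m, fun ω => u (J m ω); P] = ∑ m, Var[fun ω => u (J m ω); P] :=
    IndepFun.variance_sum (fun m _ => hY m) fun m _ m' _ hne =>
      (hind.comp (fun _ => u) fun _ => measurable_of_finite u).indepFun hne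
  rw [variance_eq_sub (memLp_finsetSum' _ fun m _ => hY m)] at hvar
  simp only [Finset.sum_fn, Pi.pow_apply] at hvar
  rw [← hvar, integral_finsetSum _ fun m _ => (hY m).integrable one_le_two]
  ring

lemma sum_integral_comp_of_sum_law {q : α → ℝ} (hJ : ∀ m, AEMeasurable (J m) P)
    (hlaw : ∀ j, ∑ m, P.real (J m ⁻¹' {j}) = Fintype.card ι * q j) (g : α → ℝ) :
    ∑ m, ∫ ω, g (J m ω) ∂P = Fintype.card ι * ∑ j, q j * g j := by
  simp_rw [integral_comp_eq_sum (hJ _), smul_eq_mul]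
  rw [Finset.sum_comm]
  simp_rw [← Finset.sum_mul, hlaw, Finset.mul_sum, mul_assoc]

lemma integral_sq_sum_comp_eq_of_centered (hJ : ∀ m, AEMeasurable (J m) P)
    (hind : iIndepFun J P) {q : α → ℝ}
    (hlaw : ∀ j, ∑ m, P.real (J m ⁻¹' {j}) = Fintype.card ι * q j)
    (u : α → ℝ) (hu : ∑ j, q j * u j = 0) :
    ∫ ω, (∑ m, u (J m ω)) ^ 2 ∂P
      = Fintype.card ι * ∑ j, q j * u j ^ 2 - ∑ m, (∑ j, P.real (J m ⁻¹' {j}) * u j) ^ 2 := by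
  have hvar : ∀ m, Var[fun ω => u (J m ω); P]
      = ∫ ω, u (J m ω) ^ 2 ∂P - (∑ j, P.real (J m ⁻¹' {j}) * u j) ^ 2 := fun m => by
    rw [variance_eq_sub (memLp_comp_of_finite (hJ m) u 2), integral_comp_eq_sum (hJ m)]
    simp only [Pi.pow_apply, smul_eq_mul]
  rw [integral_sq_sum_comp_of_iIndepFun hJ hind, sum_integral_comp_of_sum_law hJ hlaw, hu]
  simp_rw [hvar]
  rw [Finset.sum_sub_distrib, sum_integral_comp_of_sum_law hJ hlaw (fun j => u j ^ 2)]
  ring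

lemma integral_norm_sum_comp_sq_eq_of_centered {κ : Type*} [Fintype κ]
    (hJ : ∀ m, AEMeasurable (J m) P) (hind : iIndepFun J P) {q : α → ℝ}
    (hlaw : ∀ j, ∑ m, P.real (J m ⁻¹' {j}) = Fintype.card ι * q j)
    (f : α → EuclideanSpace ℝ κ) (hf : ∑ j, q j • f j = 0) :
    ∫ ω, ‖∑ m, f (J m ω)‖ ^ 2 ∂P
      = Fintype.card ι * ∑ j, q j * ‖f j‖ ^ 2
        - ∑ m, ‖∑ j, P.real (J m ⁻¹' {j}) • f j‖ ^ 2 := by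
  have hcoord : ∀ b, ∑ j, q j * f j b = 0 := fun b => by
    simpa using congrArg (fun x : EuclideanSpace ℝ κ => x b) hf
  simp only [EuclideanSpace.real_norm_sq_eq, WithLp.ofLp_sum, PiLp.smul_apply, smul_eq_mul,
    Finset.sum_apply]
  rw [integral_finsetSum _ fun b _ =>
    (memLp_finsetSum _ fun m _ => memLp_comp_of_finite (hJ m) (fun j => f j b) 2).integrable_sq]
  rw [Finset.sum_congr rfl fun b _ =>
      integral_sq_sum_comp_eq_of_centered hJ hind hlaw (fun j => f j b) (hcoord b),
    Finset.sum_sub_distrib, Finset.sum_comm (s := (Finset.univ : Finset κ))]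
  congr 1
  simp_rw [Finset.mul_sum]
  exact Finset.sum_comm

lemma integral_norm_inv_smul_sum_sub_sq {κ : Type*} [Fintype κ] {S : ℕ} (hS : 0 < S)
    {J : Fin S → Ω → α} (hJ : ∀ m, AEMeasurable (J m) P) (hind : iIndepFun J P) {q : α → ℝ}
    (hlaw : ∀ j, ∑ m, P.real (J m ⁻¹' {j}) = S * q j) (V : α → EuclideanSpace ℝ κ)
    {mu : EuclideanSpace ℝ κ} (hcenter : ∑ j, q j • (V j - mu) = 0) :
    ∫ ω, ‖(S : ℝ)⁻¹ • ∑ m, V (J m ω) - mu‖ ^ 2 ∂P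
      = (S : ℝ)⁻¹ * ∑ j, q j * ‖V j - mu‖ ^ 2
        - (S : ℝ)⁻¹ ^ 2 * ∑ m, ‖∑ j, P.real (J m ⁻¹' {j}) • (V j - mu)‖ ^ 2 := by
  simp_rw [norm_inv_smul_sum_sub_sq hS]
  rw [integral_const_mul, integral_norm_sum_comp_sq_eq_of_centered hJ hind (by simpa using hlaw)
    (fun j => V j - mu) hcenter, Fintype.card_fin]
  field_simp

end FiniteValued

lemma sum_restrict_Ico_of_monotone {X : Type*} [LinearOrder X] [TopologicalSpace X]
    [OrderClosedTopology X] [MeasurableSpace X] [OpensMeasurableSpace X] {μ : Measure X}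
    {a : ℕ → X} (ha : Monotone a) (n : ℕ) :
    ∑ k ∈ Finset.range n, μ.restrict (Set.Ico (a k) (a (k + 1)))
      = μ.restrict (Set.Ico (a 0) (a n)) := by
  induction n with
  | zero => simp
  | succ n ih =>
    rw [Finset.sum_range_succ, ih, ← Measure.restrict_union Set.Ico_disjoint_Ico_same
      measurableSet_Ico, Set.Ico_union_Ico_eq_Ico (ha n.zero_le) (ha n.le_succ)]

lemma volume_Ico_div {S : ℕ} (k : ℝ) :
    volume (Set.Ico (k / S) ((k + 1) / S)) = ENNReal.ofReal (S : ℝ)⁻¹ := by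
  rw [Real.volume_Ico]
  congr 1
  ring

lemma sum_measure_preimage_of_isUniform_Ico_div {Ω : Type*} [MeasurableSpace Ω] {P : Measure Ω}
    {S : ℕ} (hS : 0 < S) {T : Fin S → Ω → ℝ}
    (hT : ∀ m : Fin S,
      pdf.IsUniform (T m) (Set.Ico (((m : ℕ) : ℝ) / S) ((((m : ℕ) : ℝ) + 1) / S)) P)
    {A : Set ℝ} (hA : MeasurableSet A) :
    ∑ m, P (T m ⁻¹' A) = S * volume (Set.Ico 0 1 ∩ A) := by
  have hvol : ENNReal.ofReal (S : ℝ)⁻¹ ≠ 0 := by simpa using hS.ne'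
  have hstratum : ∀ m : Fin S, P (T m ⁻¹' A)
      = S * volume.restrict (Set.Ico (((m : ℕ) : ℝ) / S) ((((m : ℕ) : ℝ) + 1) / S)) A := by
    intro m
    rw [(hT m).measure_preimage (by rw [volume_Ico_div]; exact hvol)
      (by rw [volume_Ico_div]; exact ENNReal.ofReal_ne_top) hA, volume_Ico_div,
      Measure.restrict_apply hA, Set.inter_comm, ENNReal.div_eq_inv_mul,
      ENNReal.ofReal_inv_of_pos (by positivity), inv_inv, ENNReal.ofReal_natCast]
  have hmono : Monotone fun k : ℕ => (k : ℝ) / S := fun k l hkl =>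
    div_le_div_of_nonneg_right (Nat.cast_le.mpr hkl) (Nat.cast_nonneg S)
  have hpartition : ∑ k ∈ Finset.range S, volume.restrict (Set.Ico ((k : ℝ) / S) ((k + 1) / S))
      = volume.restrict (Set.Ico 0 1) := by
    simpa [hS.ne'] using sum_restrict_Ico_of_monotone (μ := volume) hmono S
  rw [Finset.sum_congr rfl fun m _ => hstratum m, ← Finset.mul_sum, ← Measure.finsetSum_apply,
    Fin.sum_univ_eq_sum_range (fun k => volume.restrict (Set.Ico ((k : ℝ) / S) ((k + 1) / S))),
    hpartition, Measure.restrict_apply hA, Set.inter_comm]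

def IsInverseCDF {n : ℕ} (p : Fin n → ℝ) (Finv : ℝ → Fin n) : Prop :=
  ∀ t : ℝ, 0 ≤ t → t < 1 → ∀ j : Fin n,
    Finv t = j ↔ (∑ i ∈ Finset.univ.filter (fun i : Fin n => (i : ℕ) < (j : ℕ)), p i) ≤ t ∧
      t < ∑ i ∈ Finset.univ.filter (fun i : Fin n => (i : ℕ) < (j : ℕ) + 1), p i

lemma IsInverseCDF.volume_Ico_inter_preimage {n : ℕ} {p : Fin n → ℝ} {Finv : ℝ → Fin n}
    (hF : IsInverseCDF p Finv) (hp : ∀ j, 0 ≤ p j) (hp1 : ∑ j, p j = 1) (j : Fin n) :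
    volume (Set.Ico 0 1 ∩ Finv ⁻¹' {j}) = ENNReal.ofReal (p j) := by
  set below := ∑ i ∈ Finset.univ.filter (fun i : Fin n => (i : ℕ) < (j : ℕ)), p i
  have hsucc : ∑ i ∈ Finset.univ.filter (fun i : Fin n => (i : ℕ) < (j : ℕ) + 1), p i
      = below + p j := by
    have : Finset.univ.filter (fun i : Fin n => (i : ℕ) < (j : ℕ) + 1)
        = insert j (Finset.univ.filter (fun i : Fin n => (i : ℕ) < (j : ℕ))) := by
      ext i
      simp only [Finset.mem_filter, Finset.mem_univ, true_and, Finset.mem_insert, Fin.ext_iff]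
      omega
    rw [this, Finset.sum_insert (by simp), add_comm]
  have hbelow : 0 ≤ below := Finset.sum_nonneg fun i _ => hp i
  have hupto : below + p j ≤ 1 := hsucc ▸ hp1 ▸
    Finset.sum_le_sum_of_subset_of_nonneg (Finset.filter_subset _ _) fun i _ _ => hp i
  have hfiber : Set.Ico 0 1 ∩ Finv ⁻¹' {j} = Set.Ico below (below + p j) := by
    ext t
    simp only [Set.mem_inter_iff, Set.mem_Ico, Set.mem_preimage, Set.mem_singleton_iff]
    constructor
    · rintro ⟨⟨h0, h1⟩, ht⟩
      exact hsucc ▸ (hF t h0 h1 j).1 ht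
    · rintro ⟨hlo, hhi⟩
      have h0 : 0 ≤ t := hbelow.trans hlo
      have h1 : t < 1 := hhi.trans_le hupto
      exact ⟨⟨h0, h1⟩, (hF t h0 h1 j).2 ⟨hlo, hsucc ▸ hhi⟩⟩
  rw [hfiber, Real.volume_Ico, add_sub_cancel_left]

lemma sum_measureReal_preimage_inverseCDF_of_isUniform {Ω : Type*} [MeasurableSpace Ω]
    {P : Measure Ω} [IsFiniteMeasure P] {S : ℕ} (hS : 0 < S) {T : Fin S → Ω → ℝ}
    (hT : ∀ m : Fin S,
      pdf.IsUniform (T m) (Set.Ico (((m : ℕ) : ℝ) / S) ((((m : ℕ) : ℝ) + 1) / S)) P)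
    {n : ℕ} {p : Fin n → ℝ} (hp : ∀ j, 0 ≤ p j) (hp1 : ∑ j, p j = 1) {Finv : ℝ → Fin n}
    (hF : IsInverseCDF p Finv) (hFm : Measurable Finv) (j : Fin n) :
    ∑ m, P.real ((fun ω => Finv (T m ω)) ⁻¹' {j}) = S * p j := by
  simp_rw [measureReal_def]
  rw [← ENNReal.toReal_sum fun m _ => measure_ne_top P _]
  change (∑ m, P (T m ⁻¹' (Finv ⁻¹' {j}))).toReal = _
  rw [sum_measure_preimage_of_isUniform_Ico_div hS hT (hFm (measurableSet_singleton j)),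
    hF.volume_Ico_inter_preimage hp hp1, ENNReal.toReal_mul, ENNReal.toReal_ofReal (hp j)]
  simp

lemma Matrix.trace_eq_sum_mul_norm_sq {κ ι : Type*} [Fintype κ] [Fintype ι]
    {Sigma : Matrix κ κ ℝ} (w : ι → ℝ) (x : ι → EuclideanSpace ℝ κ)
    (hSigma : ∀ a b, Sigma a b = ∑ j, w j * (x j a * x j b)) :
    Sigma.trace = ∑ j, w j * ‖x j‖ ^ 2 := by
  simp_rw [Matrix.trace, Matrix.diag_apply, hSigma, EuclideanSpace.real_norm_sq_eq, Finset.mul_sum]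
  rw [Finset.sum_comm]
  simp_rw [sq]

/-- **MSE ordering: stratified vs. i.i.d. SANTA.** With `Finv` the inverse CDF of the
probability vector `p`, `μ = ∑ j, p j • V j`, and `Σ = ∑ j, p j (V j - μ)(V j - μ)ᵀ`:
if `T m ~ Uniform [m/S, (m+1)/S)` independently (stratified) and `i 1, …, i S` are
i.i.d. categorical with probabilities `p` (SANTA), then
`E[‖(1/S) ∑ m, V (Finv (T m)) - μ‖²] ≤ E[‖(1/S) ∑ s, V (i s) - μ‖²] = (1/S) tr Σ`. -/
theorem s2anta_strat_mse_le_santa_mse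
    {Ω : Type*} [MeasurableSpace Ω] (P : Measure Ω) [IsProbabilityMeasure P]
    {n d S : ℕ} (hS : 0 < S)
    (V : Fin n → EuclideanSpace ℝ (Fin d))
    (p : Fin n → ℝ) (hp : ∀ j, 0 ≤ p j) (hp1 : ∑ j, p j = 1)
    (Finv : ℝ → Fin n) (hFinvMeas : Measurable Finv)
    (hFinv : ∀ t : ℝ, 0 ≤ t → t < 1 → ∀ j : Fin n,
      Finv t = j ↔
        (∑ i ∈ Finset.univ.filter (fun i : Fin n => (i : ℕ) < (j : ℕ)), p i) ≤ t ∧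
          t < ∑ i ∈ Finset.univ.filter (fun i : Fin n => (i : ℕ) < (j : ℕ) + 1), p i)
    (T : Fin S → Ω → ℝ) (hTmeas : ∀ m, Measurable (T m))
    (hTindep : iIndepFun T P)
    (hTunif : ∀ m : Fin S,
      pdf.IsUniform (T m) (Set.Ico (((m : ℕ) : ℝ) / S) ((((m : ℕ) : ℝ) + 1) / S)) P)
    (i : Fin S → Ω → Fin n)
    (himeas : ∀ s, Measurable (i s))
    (hiindep : iIndepFun i P)
    (hilaw : ∀ s j, (P {ω | i s ω = j}).toReal = p j)
    (mu : EuclideanSpace ℝ (Fin d)) (hmu : mu = ∑ j, p j • V j)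
    (Sigma : Matrix (Fin d) (Fin d) ℝ)
    (hSigma : ∀ a b, Sigma a b = ∑ j, p j * ((V j a - mu a) * (V j b - mu b))) :
    (∫ ω, ‖((S : ℝ)⁻¹ • ∑ m, V (Finv (T m ω))) - mu‖ ^ 2 ∂P)
        ≤ (∫ ω, ‖((S : ℝ)⁻¹ • ∑ s, V (i s ω)) - mu‖ ^ 2 ∂P) ∧
      (∫ ω, ‖((S : ℝ)⁻¹ • ∑ s, V (i s ω)) - mu‖ ^ 2 ∂P)
        = (S : ℝ)⁻¹ * Matrix.trace Sigma := by
  have hilaw' : ∀ s j, P.real (i s ⁻¹' {j}) = p j := hilaw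
  have hcenter : ∑ j, p j • (V j - mu) = 0 := by
    simp_rw [smul_sub, Finset.sum_sub_distrib, ← Finset.sum_smul, hp1, one_smul, hmu, sub_self]
  have hstrat := integral_norm_inv_smul_sum_sub_sq hS (J := fun m ω => Finv (T m ω))
    (fun m => (hFinvMeas.comp (hTmeas m)).aemeasurable)
    (hTindep.comp (fun _ => Finv) fun _ => hFinvMeas)
    (sum_measureReal_preimage_inverseCDF_of_isUniform hS hTunif hp hp1 hFinv hFinvMeas) V hcenter
  have hiid := integral_norm_inv_smul_sum_sub_sq hS (fun s => (himeas s).aemeasurable) hiindep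
    (fun j => by simp [hilaw']) V hcenter
  simp only [hilaw', hcenter, norm_zero, zero_pow two_ne_zero, Finset.sum_const_zero, mul_zero,
    sub_zero] at hiid
  have htrace := Matrix.trace_eq_sum_mul_norm_sq p (fun j => V j - mu) (by simpa using hSigma)
  refine ⟨?_, by rw [hiid, htrace]⟩
  rw [hstrat, hiid, sub_le_self_iff]
  positivity
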